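/- arXiv:2011.05579 — 2 statements merged into one kernel-verified Lean document; each statement's English description precedes it below -/
import Mathlib

section
/- Let $(M,\eta,H)$ be a contact Hamiltonian system. A vector field $X$ on $M$ is a dynamical symmetry (i.e., $\eta([X_H,X]) = 0$) if and only if the function $f = -\eta(X)$ commutes with $H$ under the Jacobi bracket, i.e., $\{H, \eta(X)\} = 0$. -/
/-!
Both sides are computed to the same function. On the left,
`η([X_H, X]) = X_H(η X) - X(η X_H) - dη(X_H, X)`, where `η(X_H) = -H` and
`dη(X_H, ·) = dH - R(H) η` because `♭(♯α) = α` forces `η(♯α) = α(R)`. On the right,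
the same relation gives `dη(♯dH, ♯df) = -(♯dH)(f) + R(f) R(H)`. Both sides then equal
`(♯dH)(f) - R(H) R(f) - H R(f) + f R(H)` with `f = η(X)`.
-/

/-- An algebraic (Lie–Rinehart style) model of the algebra of smooth functions `R`
and the module of vector fields `V` on a manifold, together with the Lie bracket of
vector fields and their action on functions by derivations. -/
structure VecCalc (R V : Type*) [CommRing R] [Algebra ℝ R]
    [AddCommGroup V] [Module R V] where
  /-- Lie bracket of vector fields. -/
  bk : V → V → V
  /-- The action `X(f)` of a vector field on a function. -/
  act : V → R → R
  act_add_left : ∀ X Y f, act (X + Y) f = act X f + act Y f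
  act_smul_left : ∀ (f : R) (X : V) (g : R), act (f • X) g = f * act X g
  act_add : ∀ X f g, act X (f + g) = act X f + act X g
  act_mul : ∀ X f g, act X (f * g) = act X f * g + f * act X g
  act_algebraMap : ∀ X (c : ℝ), act X (algebraMap ℝ R c) = 0
  bk_antisymm : ∀ X Y, bk X Y = - bk Y X
  bk_add_left : ∀ X Y Z, bk (X + Y) Z = bk X Z + bk Y Z
  bk_leibniz : ∀ X (f : R) Y, bk X (f • Y) = f • bk X Y + act X f • Y
  act_bk : ∀ X Y f, act (bk X Y) f = act X (act Y f) - act Y (act X f)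

namespace VecCalc

variable {R V : Type*} [CommRing R] [Algebra ℝ R] [AddCommGroup V] [Module R V]

/-- The exterior differential of a one-form: `dη(X,Y) = X(η(Y)) - Y(η(X)) - η([X,Y])`. -/
def dOne (C : VecCalc R V) (η : V →ₗ[R] R) (X Y : V) : R :=
  C.act X (η Y) - C.act Y (η X) - η (C.bk X Y)

/-- The musical map `♭` of a contact form: `♭(X) = i_X dη + η(X) η`, evaluated on `Y`. -/
def flatv (C : VecCalc R V) (η : V →ₗ[R] R) (X Y : V) : R :=
  C.dOne η X Y + η X * η Y

/-- `Rb` is the Reeb vector field of the contact form `η`: `η(Rb) = 1`, `i_Rb dη = 0`. -/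
def IsReeb (C : VecCalc R V) (η : V →ₗ[R] R) (Rb : V) : Prop :=
  η Rb = 1 ∧ ∀ Y, C.dOne η Rb Y = 0

/-- The Lie derivative of the one-form `η` along `X`, evaluated on `Y`:
`(L_X η)(Y) = X(η(Y)) - η([X,Y])`. -/
def lieOne (C : VecCalc R V) (η : V →ₗ[R] R) (X Y : V) : R :=
  C.act X (η Y) - η (C.bk X Y)

/-- The differential of a function, as an `R`-linear one-form. -/
def dfun (C : VecCalc R V) (f : R) : V →ₗ[R] R where
  toFun X := C.act X f
  map_add' X Y := C.act_add_left X Y f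
  map_smul' c X := by simpa using C.act_smul_left c X f

end VecCalc

namespace VecCalc

variable {R V : Type*} [CommRing R] [Algebra ℝ R] [AddCommGroup V] [Module R V]

/-- `♯_Λ α = ♯α - α(Rb) Rb`, where `sharp = ♯ = ♭⁻¹`. -/
def sharpLam (sharp : (V →ₗ[R] R) → V) (Rb : V) (α : V →ₗ[R] R) : V :=
  sharp α - α Rb • Rb

/-- The contact Hamiltonian vector field `X_f = ♯_Λ(df) - f Rb`. -/
def XHam (C : VecCalc R V) (sharp : (V →ₗ[R] R) → V) (Rb : V) (f : R) : V :=
  sharpLam sharp Rb (C.dfun f) - f • Rb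

/-- The Jacobi bracket of the contact manifold:
`{f, g} = Λ(df, dg) - f Rb(g) + g Rb(f)`, where `Λ(α, β) = -dη(♯α, ♯β)`. -/
def jbr (C : VecCalc R V) (η : V →ₗ[R] R) (sharp : (V →ₗ[R] R) → V) (Rb : V)
    (f g : R) : R :=
  -(C.dOne η (sharp (C.dfun f)) (sharp (C.dfun g))) - f * C.act Rb g + g * C.act Rb f

end VecCalc

namespace VecCalc

variable {R V : Type*} [CommRing R] [Algebra ℝ R] [AddCommGroup V] [Module R V]
  (C : VecCalc R V) (η : V →ₗ[R] R)

lemma dfun_apply (f : R) (X : V) : C.dfun f X = C.act X f := rfl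

lemma act_neg (X : V) (f : R) : C.act X (-f) = -C.act X f :=
  (AddMonoidHom.mk' (C.act X) (C.act_add X)).map_neg f

lemma act_sub (X : V) (f g : R) : C.act X (f - g) = C.act X f - C.act X g :=
  (AddMonoidHom.mk' (C.act X) (C.act_add X)).map_sub f g

lemma bk_sub_left (X Y Z : V) : C.bk (X - Y) Z = C.bk X Z - C.bk Y Z :=
  (AddMonoidHom.mk' (C.bk · Z) (C.bk_add_left · · Z)).map_sub X Y

lemma eta_bk_smul_left (f : R) (X Y : V) :
    η (C.bk (f • X) Y) = f * η (C.bk X Y) - C.act Y f * η X := by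
  rw [C.bk_antisymm, C.bk_leibniz, C.bk_antisymm Y X]
  simp only [map_neg, map_add, map_smul, smul_eq_mul]
  ring

lemma dOne_antisymm (X Y : V) : C.dOne η X Y = -C.dOne η Y X := by
  simp only [dOne, C.bk_antisymm X Y, map_neg]
  ring

lemma dOne_smul_left (f : R) (X Y : V) : C.dOne η (f • X) Y = f * C.dOne η X Y := by
  simp only [dOne, C.act_smul_left, map_smul, smul_eq_mul, C.act_mul, C.eta_bk_smul_left]
  ring

lemma dOne_sub_left (X Y Z : V) : C.dOne η (X - Y) Z = C.dOne η X Z - C.dOne η Y Z := by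
  have hact : C.act (X - Y) (η Z) = C.act X (η Z) - C.act Y (η Z) :=
    (C.dfun (η Z)).map_sub X Y
  simp only [dOne, hact, map_sub, C.act_sub, C.bk_sub_left]
  ring

variable {C η} {Rb : V} {sharp : (V →ₗ[R] R) → V}

lemma eta_sharp (hRb : C.IsReeb η Rb)
    (hsharp : ∀ (α : V →ₗ[R] R) (Y : V), C.flatv η (sharp α) Y = α Y)
    (α : V →ₗ[R] R) :
    η (sharp α) = α Rb := by
  simpa [flatv, C.dOne_antisymm η _ Rb, hRb.1, hRb.2] using hsharp α Rb

lemma dOne_sharp (hRb : C.IsReeb η Rb)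
    (hsharp : ∀ (α : V →ₗ[R] R) (Y : V), C.flatv η (sharp α) Y = α Y)
    (α : V →ₗ[R] R) (Y : V) :
    C.dOne η (sharp α) Y = α Y - α Rb * η Y := by
  rw [← hsharp α Y, flatv, eta_sharp hRb hsharp]
  ring

lemma eta_XHam (hRb : C.IsReeb η Rb)
    (hsharp : ∀ (α : V →ₗ[R] R) (Y : V), C.flatv η (sharp α) Y = α Y) (H : R) :
    η (C.XHam sharp Rb H) = -H := by
  simp only [XHam, sharpLam, map_sub, map_smul, smul_eq_mul, eta_sharp hRb hsharp, hRb.1]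
  ring

lemma dOne_XHam (hRb : C.IsReeb η Rb)
    (hsharp : ∀ (α : V →ₗ[R] R) (Y : V), C.flatv η (sharp α) Y = α Y) (H : R) (Y : V) :
    C.dOne η (C.XHam sharp Rb H) Y = C.act Y H - C.act Rb H * η Y := by
  simp only [XHam, sharpLam, C.dOne_sub_left, C.dOne_smul_left, dOne_sharp hRb hsharp, hRb.2,
    dfun_apply]
  ring

lemma act_XHam (H f : R) :
    C.act (C.XHam sharp Rb H) f
      = C.act (sharp (C.dfun H)) f - C.act Rb H * C.act Rb f - H * C.act Rb f := by
  rw [← dfun_apply, XHam, sharpLam]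
  simp only [map_sub, map_smul, smul_eq_mul, dfun_apply]

lemma jbr_eq (hRb : C.IsReeb η Rb)
    (hsharp : ∀ (α : V →ₗ[R] R) (Y : V), C.flatv η (sharp α) Y = α Y) (H f : R) :
    C.jbr η sharp Rb H f
      = C.act (sharp (C.dfun H)) f - C.act Rb f * C.act Rb H - H * C.act Rb f
        + f * C.act Rb H := by
  rw [jbr, C.dOne_antisymm, dOne_sharp hRb hsharp, eta_sharp hRb hsharp]
  simp only [dfun_apply]
  ring

theorem eta_bk_XHam_eq_jbr (hRb : C.IsReeb η Rb)
    (hsharp : ∀ (α : V →ₗ[R] R) (Y : V), C.flatv η (sharp α) Y = α Y) (H : R) (X : V) :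
    η (C.bk (C.XHam sharp Rb H) X) = C.jbr η sharp Rb H (η X) := by
  have hbk : η (C.bk (C.XHam sharp Rb H) X)
      = C.act (C.XHam sharp Rb H) (η X) - C.act X (η (C.XHam sharp Rb H))
        - C.dOne η (C.XHam sharp Rb H) X := by
    rw [dOne]; ring
  rw [hbk, act_XHam, eta_XHam hRb hsharp, C.act_neg, dOne_XHam hRb hsharp, jbr_eq hRb hsharp]
  ring

end VecCalc

theorem dynamical_symmetry_iff_commutes_general
    {R V : Type*} [CommRing R] [Algebra ℝ R] [AddCommGroup V] [Module R V]
    (C : VecCalc R V) (η : V →ₗ[R] R) (Rb : V) (hRb : C.IsReeb η Rb)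
    (sharp : (V →ₗ[R] R) → V)
    (hsharp : ∀ (α : V →ₗ[R] R) (Y : V), C.flatv η (sharp α) Y = α Y)
    (H : R) :
    ∀ X : V, η (C.bk (C.XHam sharp Rb H) X) = 0 ↔ C.jbr η sharp Rb H (η X) = 0 := fun X => by
  rw [VecCalc.eta_bk_XHam_eq_jbr hRb hsharp H X]

/-- For a contact Hamiltonian system `(M, η, H)`, a vector field `X` is a
dynamical symmetry, i.e. `η([X_H, X]) = 0`, if and only if the function `η(X)` commutes
with `H` under the Jacobi bracket, i.e. `{H, η(X)} = 0`. -/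
theorem dynamical_symmetry_iff_commutes
    {R V : Type*} [CommRing R] [Algebra ℝ R] [AddCommGroup V] [Module R V]
    (C : VecCalc R V) (η : V →ₗ[R] R) (Rb : V) (hRb : C.IsReeb η Rb)
    (sharp : (V →ₗ[R] R) → V)
    (hsharp : ∀ (α : V →ₗ[R] R) (Y : V), C.flatv η (sharp α) Y = α Y)
    (hflat_inj : ∀ X X' : V, (∀ Y, C.flatv η X Y = C.flatv η X' Y) → X = X')
    (H : R) :
    ∀ X : V, η (C.bk (C.XHam sharp Rb H) X) = 0 ↔ C.jbr η sharp Rb H (η X) = 0 :=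
  dynamical_symmetry_iff_commutes_general C η Rb hRb sharp hsharp H
end

section
/- In Darboux coordinates $(q^i, p_i, z)$ on a contact manifold with $\eta = dz - p_i dq^i$, a submanifold $N$ locally defined by the vanishing of functions $\phi_a$, $a = 1,\dots,k$, is coisotropic if and only if for all $a,b$: $\left(\frac{\partial\phi_a}{\partial q^i} + p_i\frac{\partial\phi_a}{\partial z}\right)\frac{\partial\phi_b}{\partial p_i} + \frac{\partial\phi_a}{\partial p_i}\left(\frac{\partial\phi_b}{\partial q^i} - p_i\frac{\partial\phi_b}{\partial z}\right) = 0$ on $N$. -/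
namespace ContactDarboux

/-- The model space `ℝ^{2n+1}` with Darboux coordinates `x = (q, p, z)`, carrying the
contact form `η = dz - pᵢ dqᶦ`. -/
abbrev Mdl (n : ℕ) := (Fin n → ℝ) × (Fin n → ℝ) × ℝ

variable {n : ℕ}

/-- The coordinate direction `∂/∂qᶦ`. -/
def eQ (i : Fin n) : Mdl n := (Pi.single i 1, 0, 0)

/-- The coordinate direction `∂/∂pᵢ`. -/
def eP (i : Fin n) : Mdl n := (0, Pi.single i 1, 0)

/-- The coordinate direction `∂/∂z`. -/
def eZ : Mdl n := (0, 0, 1)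

/-- The map `♯_Λ` of the contact form `η = dz - pᵢ dqᶦ` at the point `x`, applied to a
covector `α`; in coordinates
`♯_Λ α = α(∂pᵢ) ∂qᵢ + (α(∂qᵢ) + pᵢ α(∂z)) ∂pᵢ - (∑ᵢ pᵢ α(∂pᵢ)) ∂z`, so that
`♯_Λ(dφ) = (∂φ/∂pᵢ)(∂qᵢ - pᵢ ∂z) + (∂φ/∂qᵢ + pᵢ ∂φ/∂z) ∂pᵢ`. -/
def sharpLam (x : Mdl n) (α : Mdl n →L[ℝ] ℝ) : Mdl n :=
  (fun i => α (eP i),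
   fun i => α (eQ i) + x.2.1 i * α eZ,
   -∑ i, x.2.1 i * α (eP i))

lemma decomp (v : Mdl n) :
    v = (∑ i, v.1 i • eQ i) + (∑ i, v.2.1 i • eP i) + v.2.2 • eZ := by
  have h1 : ∀ (c : Fin n → ℝ), ∑ i, c i • (Pi.single i 1 : Fin n → ℝ) = c := by
    intro c
    ext j
    simp [Finset.sum_apply, Pi.single_apply, mul_comm]
  refine Prod.ext ?_ (Prod.ext ?_ ?_)
  · simp [eQ, eP, eZ, Prod.fst_sum, h1]
  · simp [eQ, eP, eZ, Prod.snd_sum, Prod.fst_sum, h1]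
  · simp [eQ, eP, eZ, Prod.snd_sum]

lemma L_apply (L : Mdl n →L[ℝ] ℝ) (v : Mdl n) :
    L v = ∑ i, v.1 i * L (eQ i) + ∑ i, v.2.1 i * L (eP i) + v.2.2 * L eZ := by
  conv_lhs => rw [decomp v]
  simp [map_sum]

lemma apply_sharp (x : Mdl n) (α L : Mdl n →L[ℝ] ℝ) :
    L (sharpLam x α) =
      ∑ i, (α (eQ i) + x.2.1 i * α eZ) * L (eP i) +
      ∑ i, α (eP i) * (L (eQ i) - x.2.1 i * L eZ) := by
  rw [L_apply]
  simp only [sharpLam]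
  rw [neg_mul, Finset.sum_mul]
  have hsum : ∑ i, x.2.1 i * α (eP i) * L eZ = ∑ i, α (eP i) * (x.2.1 i * L eZ) :=
    Finset.sum_congr rfl fun i _ => by ring
  rw [hsum]
  simp only [mul_sub, Finset.sum_sub_distrib]
  ring

/-- In Darboux coordinates `(qᶦ, pᵢ, z)` with `η = dz - pᵢ dqᶦ`, a
submanifold `N` locally defined by the vanishing of (independent) functions `φ_a`,
`a = 1,…,k`, is coisotropic (i.e. `(T_xN)^{⊥Λ} = ♯_Λ((T_xN)°) ⊆ T_xN` at every `x ∈ N`)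
if and only if for all `a, b`:
`(∂φa/∂qᶦ + pᵢ ∂φa/∂z) ∂φb/∂pᵢ + ∂φa/∂pᵢ (∂φb/∂qᶦ - pᵢ ∂φb/∂z) = 0` on `N`
(sum over `i`). -/
theorem coisotropic_iff_coordinate_pde {k : ℕ} (φ : Fin k → Mdl n → ℝ)
    (hφ : ∀ a, ContDiff ℝ (⊤ : ℕ∞) (φ a))
    (hindep : ∀ x : Mdl n, (∀ a, φ a x = 0) →
      LinearIndependent ℝ (fun a => fderiv ℝ (φ a) x)) :
    (∀ x : Mdl n, (∀ a, φ a x = 0) →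
        ∀ α : Mdl n →L[ℝ] ℝ,
          (∀ v : Mdl n, (∀ a, fderiv ℝ (φ a) x v = 0) → α v = 0) →
          ∀ b, fderiv ℝ (φ b) x (sharpLam x α) = 0)
      ↔
      (∀ x : Mdl n, (∀ a, φ a x = 0) → ∀ a b,
        ∑ i,
          ((fderiv ℝ (φ a) x (eQ i) + x.2.1 i * fderiv ℝ (φ a) x eZ) *
              fderiv ℝ (φ b) x (eP i) +
            fderiv ℝ (φ a) x (eP i) *
              (fderiv ℝ (φ b) x (eQ i) - x.2.1 i * fderiv ℝ (φ b) x eZ)) = 0) := by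
  constructor
  · intro h x hx a b
    have h0 := h x hx (fderiv ℝ (φ a) x) (fun v hv => hv a) b
    rw [apply_sharp] at h0
    rw [Finset.sum_add_distrib]
    exact h0
  · intro h x hx α hα b
    set D : Fin k → Module.Dual ℝ (Mdl n) :=
      fun a => (fderiv ℝ (φ a) x : Mdl n →ₗ[ℝ] ℝ) with hD
    have hker : ⨅ a, LinearMap.ker (D a) ≤ LinearMap.ker (α : Mdl n →ₗ[ℝ] ℝ) := by
      intro v hv
      simp only [Submodule.mem_iInf, LinearMap.mem_ker] at hv ⊢
      exact hα v fun a => hv a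
    obtain ⟨c, hc⟩ := (Submodule.mem_span_range_iff_exists_fun ℝ).1
      (mem_span_of_iInf_ker_le_ker hker)
    have hαv : ∀ v : Mdl n, α v = ∑ a, c a * fderiv ℝ (φ a) x v := by
      intro v
      have h2 := congrArg (fun (L : Mdl n →ₗ[ℝ] ℝ) => L v) hc
      simpa [D] using h2.symm
    rw [apply_sharp]
    simp only [hαv]
    rw [← Finset.sum_add_distrib]
    have key : ∀ i ∈ Finset.univ,
        ((∑ a, c a * fderiv ℝ (φ a) x (eQ i)) +
            x.2.1 i * ∑ a, c a * fderiv ℝ (φ a) x eZ) * fderiv ℝ (φ b) x (eP i) +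
          (∑ a, c a * fderiv ℝ (φ a) x (eP i)) *
            (fderiv ℝ (φ b) x (eQ i) - x.2.1 i * fderiv ℝ (φ b) x eZ) =
        ∑ a, c a *
          ((fderiv ℝ (φ a) x (eQ i) + x.2.1 i * fderiv ℝ (φ a) x eZ) *
              fderiv ℝ (φ b) x (eP i) +
            fderiv ℝ (φ a) x (eP i) *
              (fderiv ℝ (φ b) x (eQ i) - x.2.1 i * fderiv ℝ (φ b) x eZ)) := by
      intro i _
      rw [Finset.mul_sum, ← Finset.sum_add_distrib, Finset.sum_mul, Finset.sum_mul,
        ← Finset.sum_add_distrib]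
      exact Finset.sum_congr rfl fun a _ => by ring
    rw [Finset.sum_congr rfl key, Finset.sum_comm]
    refine Finset.sum_eq_zero fun a _ => ?_
    rw [← Finset.mul_sum, h x hx a b, mul_zero]

end ContactDarboux
end
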